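/- arXiv:2603.27648 — 10 statements merged into one kernel-verified Lean document; each statement's English description precedes it below -/
import Mathlib

section
/- In any group G satisfying [G'', G, G] = 1 (centre-by-centre-by-metabelian), for all u, v, w in the derived subgroup G', the commutator [[u, v], w] equals 1. -/
/-!
Put `a = ⁅u, v⁆ ∈ G''`. The hypothesis makes every `⁅a, x⁆` central, and then
`x ↦ ⁅a, x⁆` is a homomorphism from `G` into the abelian group `Z(G)`. Such a homomorphism
kills `G'`, so `⁅a, w⁆ = 1` for every `w ∈ G'`.
-/

open scoped commutatorElement

open Subgroup

section

variable {G : Type*} [Group G]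

def commutatorElementLeftHom (a : G) (ha : ∀ x, ⁅a, x⁆ ∈ center G) : G →* center G where
  toFun x := ⟨⁅a, x⁆, ha x⟩
  map_one' := by simp
  map_mul' x y := by
    ext
    change ⁅a, x * y⁆ = ⁅a, x⁆ * ⁅a, y⁆
    rw [commutatorElement_mul_right_eq_mul_conj,
      mul_assoc _ x, mem_center_iff.mp (ha y) x, ← mul_assoc, mul_inv_cancel_right]

open scoped IsMulCommutative in
theorem commutatorElement_eq_one_of_mem_commutator {a : G} (ha : ∀ x, ⁅a, x⁆ ∈ center G)
    {c : G} (hc : c ∈ commutator G) : ⁅a, c⁆ = 1 :=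
  congrArg Subtype.val
    (MonoidHom.mem_ker.mp (Abelianization.commutator_subset_ker (commutatorElementLeftHom a ha) hc))

theorem commutator_le_center_of_commutator_commutator_eq_bot {H : Subgroup G}
    (h : ⁅⁅H, (⊤ : Subgroup G)⁆, (⊤ : Subgroup G)⁆ = ⊥) :
    ⁅H, (⊤ : Subgroup G)⁆ ≤ center G := by
  rwa [commutator_eq_bot_iff_le_centralizer, coe_top, centralizer_univ] at h

end

theorem stmt0 {G : Type*} [Group G]
    (h : ⁅⁅derivedSeries G 2, (⊤ : Subgroup G)⁆, (⊤ : Subgroup G)⁆ = (⊥ : Subgroup G))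
    (u v w : G) (hu : u ∈ derivedSeries G 1) (hv : v ∈ derivedSeries G 1)
    (hw : w ∈ derivedSeries G 1) :
    ⁅⁅u, v⁆, w⁆ = 1 := by
  have huv : ⁅u, v⁆ ∈ derivedSeries G 2 := commutator_mem_commutator hu hv
  have hcentral : ∀ x, ⁅⁅u, v⁆, x⁆ ∈ center G := fun x =>
    commutator_le_center_of_commutator_commutator_eq_bot h
      (commutator_mem_commutator huv (mem_top x))
  exact commutatorElement_eq_one_of_mem_commutator hcentral (by rwa [← derivedSeries_one])
end

section
/- In any group G satisfying [G'', G, G] = 1, for all u, v in the derived subgroup G', we have [u⁻¹, v] = [u, v]⁻¹. -/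
/-!
Write `Z` for the centre. If `⁅c, x⁆ ∈ Z` for every `x`, then `x ↦ ⁅c, x⁆` is a homomorphism
`G →* Z`, because `⁅c, x * y⁆ = ⁅c, x⁆ * x ⁅c, y⁆ x⁻¹`. Its target is abelian, so it kills `G'`:
`c` commutes with `G'`. The hypothesis says exactly that every `c ∈ G''` has this property, so
`G''` commutes with `G'`. For `u, v ∈ G'` the commutator `⁅u, v⁆` lies in `G''` and so commutes
with `u`, and then `⁅u⁻¹, v⁆ = u⁻¹ ⁅u, v⁆⁻¹ u = ⁅u, v⁆⁻¹` (Mathlib's convention is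
`⁅a, b⁆ = a b a⁻¹ b⁻¹`; the argument is symmetric in the two conventions).
-/

open scoped commutatorElement

section

open Subgroup
open scoped IsMulCommutative

variable {G : Type*} [Group G]

theorem commutatorElement_mem_center_of_commutator_commutator_top_eq_bot {H : Subgroup G}
    (hH : ⁅⁅H, (⊤ : Subgroup G)⁆, (⊤ : Subgroup G)⁆ = ⊥) {c : G} (hc : c ∈ H) (x : G) :
    ⁅c, x⁆ ∈ center G := by
  rw [mem_center_iff]
  intro g
  have hmem : ⁅⁅c, x⁆, g⁆ ∈ ⁅⁅H, (⊤ : Subgroup G)⁆, (⊤ : Subgroup G)⁆ :=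
    commutator_mem_commutator (commutator_mem_commutator hc (mem_top x)) (mem_top g)
  rw [hH, mem_bot, commutatorElement_eq_one_iff_mul_comm] at hmem
  exact hmem.symm

def commutatorElementHom (c : G) (hc : ∀ x, ⁅c, x⁆ ∈ center G) : G →* center G where
  toFun x := ⟨⁅c, x⁆, hc x⟩
  map_one' := by ext; simp
  map_mul' x y := by
    ext
    have hconj : ⁅c, x * y⁆ = ⁅c, x⁆ * (x * ⁅c, y⁆ * x⁻¹) := by
      simp only [commutatorElement_def]; group
    have hcomm : x * ⁅c, y⁆ = ⁅c, y⁆ * x := mem_center_iff.mp (hc y) x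
    simp only [coe_mul, hconj, hcomm, mul_inv_cancel_right]

theorem commute_of_mem_commutator {c w : G} (hc : ∀ x, ⁅c, x⁆ ∈ center G)
    (hw : w ∈ commutator G) : Commute c w := by
  have hker := Abelianization.commutator_subset_ker (commutatorElementHom c hc) hw
  rw [MonoidHom.mem_ker, Subtype.ext_iff] at hker
  exact commutatorElement_eq_one_iff_commute.mp hker

end

theorem commutatorElement_inv_left_of_commute {G : Type*} [Group G] {u v : G}
    (h : Commute u ⁅u, v⁆) : ⁅u⁻¹, v⁆ = ⁅u, v⁆⁻¹ := by
  have hconj : ⁅u⁻¹, v⁆ = u⁻¹ * ⁅u, v⁆⁻¹ * u := by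
    simp only [commutatorElement_def]; group
  rw [hconj, h.inv_left.inv_right.eq, inv_mul_cancel_right]

theorem stmt1 {G : Type*} [Group G]
    (h : ⁅⁅derivedSeries G 2, (⊤ : Subgroup G)⁆, (⊤ : Subgroup G)⁆ = (⊥ : Subgroup G))
    (u v : G) (hu : u ∈ derivedSeries G 1) (hv : v ∈ derivedSeries G 1) :
    ⁅u⁻¹, v⁆ = ⁅u, v⁆⁻¹ := by
  have huv : ⁅u, v⁆ ∈ derivedSeries G 2 := by
    rw [derivedSeries_succ]
    exact Subgroup.commutator_mem_commutator hu hv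
  have hcentral := commutatorElement_mem_center_of_commutator_commutator_top_eq_bot h huv
  rw [derivedSeries_one] at hu
  exact commutatorElement_inv_left_of_commute (commute_of_mem_commutator hcentral hu).symm
end

section
/- In any group G satisfying [G'', G, G] = 1, for all u, v, w in the derived subgroup G', we have [uv, w] = [u, w][v, w] and [u, vw] = [u, v][u, w]. -/
/-!
By the three subgroups lemma, `[N, G, G] = 1` forces `[G', N] = 1`; for `N = G''` this says that
`G'` centralizes `G''`. The expansions `[uv, w] = u[v, w]u⁻¹ · [u, w]` and
`[u, vw] = [u, v] · v[u, w]v⁻¹` then collapse to the claimed identities, since for `u, v, w ∈ G'`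
the conjugated commutators lie in `G''`.
-/

open scoped commutatorElement

section

variable {G : Type*} [Group G]

theorem commutatorElement_mul_left_of_commute {a b c : G} (ha : Commute a ⁅b, c⁆)
    (hc : Commute ⁅a, c⁆ ⁅b, c⁆) : ⁅a * b, c⁆ = ⁅a, c⁆ * ⁅b, c⁆ := by
  rw [commutatorElement_mul_left_eq_conj_mul, ha.eq, mul_inv_cancel_right, hc.eq]

theorem commutatorElement_mul_right_of_commute {a b c : G} (hb : Commute b ⁅a, c⁆) :
    ⁅a, b * c⁆ = ⁅a, b⁆ * ⁅a, c⁆ := by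
  rw [commutatorElement_mul_right_eq_mul_conj, mul_assoc _ b, hb.eq, ← mul_assoc,
    mul_inv_cancel_right]

theorem commute_of_mem_commutator_of_commutator_commutator_top_eq_bot
    {N : Subgroup G} (h : ⁅⁅N, (⊤ : Subgroup G)⁆, (⊤ : Subgroup G)⁆ = ⊥) {a b : G}
    (ha : a ∈ commutator G) (hb : b ∈ N) : Commute a b := by
  have h' : ⁅⁅(⊤ : Subgroup G), N⁆, (⊤ : Subgroup G)⁆ = ⊥ := by
    rwa [Subgroup.commutator_comm ⊤ N]
  have hN : ⁅commutator G, N⁆ = ⊥ := Subgroup.commutator_commutator_eq_bot_of_rotate h' h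
  rw [← commutatorElement_eq_one_iff_commute, ← Subgroup.mem_bot, ← hN]
  exact Subgroup.commutator_mem_commutator ha hb

end

theorem stmt2 {G : Type*} [Group G]
    (h : ⁅⁅derivedSeries G 2, (⊤ : Subgroup G)⁆, (⊤ : Subgroup G)⁆ = (⊥ : Subgroup G))
    (u v w : G) (hu : u ∈ derivedSeries G 1) (hv : v ∈ derivedSeries G 1)
    (hw : w ∈ derivedSeries G 1) :
    ⁅u * v, w⁆ = ⁅u, w⁆ * ⁅v, w⁆ ∧ ⁅u, v * w⁆ = ⁅u, v⁆ * ⁅u, w⁆ := by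
  have hcomm {a b : G} (ha : a ∈ derivedSeries G 1) (hb : b ∈ derivedSeries G 2) :
      Commute a b := by
    rw [derivedSeries_one] at ha
    exact commute_of_mem_commutator_of_commutator_commutator_top_eq_bot h ha hb
  have huw : ⁅u, w⁆ ∈ derivedSeries G 2 := Subgroup.commutator_mem_commutator hu hw
  have hvw : ⁅v, w⁆ ∈ derivedSeries G 2 := Subgroup.commutator_mem_commutator hv hw
  exact ⟨commutatorElement_mul_left_of_commute (hcomm hu hvw)
      (hcomm (derivedSeries_antitone G (Nat.le_succ 1) huw) hvw),
    commutatorElement_mul_right_of_commute (hcomm hv huw)⟩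
end

section
/- In any group G satisfying [G'', G, G] = 1, for all u, v, w in the derived subgroup G', we have [u^v, w] = [u, w], where u^v = v⁻¹uv. -/
/-!
By the three subgroups lemma, `⁅⁅G'', G⁆, G⁆ = 1` forces `⁅G', G''⁆ = 1`. Since
`v⁻¹ u v = u ⁅u⁻¹, v⁻¹⁆` and `⁅u⁻¹, v⁻¹⁆ ∈ G''` commutes with `w ∈ G'`, conjugating `u` by `v`
does not change its commutator with `w`.
-/

open scoped commutatorElement

namespace Subgroup

variable {G : Type*} [Group G]

theorem commutator_commutator_eq_bot_of_commutator_top_top_eq_bot {H : Subgroup G}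
    (h : ⁅⁅H, (⊤ : Subgroup G)⁆, (⊤ : Subgroup G)⁆ = ⊥) : ⁅_root_.commutator G, H⁆ = ⊥ :=
  commutator_commutator_eq_bot_of_rotate (by rwa [commutator_comm ⊤ H]) h

theorem commute_of_mem_of_commutator_top_top_eq_bot {H : Subgroup G}
    (h : ⁅⁅H, (⊤ : Subgroup G)⁆, (⊤ : Subgroup G)⁆ = ⊥) {c w : G} (hc : c ∈ H) (hw : w ∈ _root_.commutator G) : Commute c w := by
  rw [← commutatorElement_eq_one_iff_commute, ← commutatorElement_inv, inv_eq_one,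
    ← mem_bot, ← commutator_commutator_eq_bot_of_commutator_top_top_eq_bot h]
  exact commutator_mem_commutator hw hc

end Subgroup

theorem conj_eq_mul_commutatorElement_inv_inv {G : Type*} [Group G] (u v : G) :
    v⁻¹ * u * v = u * ⁅u⁻¹, v⁻¹⁆ := by
  simp only [commutatorElement_def]
  group

theorem commutatorElement_mul_left_of_commute_s3 {G : Type*} [Group G] {u c w : G}
    (hcw : Commute c w) : ⁅u * c, w⁆ = ⁅u, w⁆ := by
  calc ⁅u * c, w⁆ = u * (c * w * c⁻¹) * u⁻¹ * w⁻¹ := by rw [commutatorElement_def]; group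
    _ = ⁅u, w⁆ := by rw [hcw.mul_inv_cancel, commutatorElement_def]

theorem stmt3 {G : Type*} [Group G]
    (h : ⁅⁅derivedSeries G 2, (⊤ : Subgroup G)⁆, (⊤ : Subgroup G)⁆ = (⊥ : Subgroup G))
    (u v w : G) (hu : u ∈ derivedSeries G 1) (hv : v ∈ derivedSeries G 1)
    (hw : w ∈ derivedSeries G 1) :
    ⁅v⁻¹ * u * v, w⁆ = ⁅u, w⁆ := by
  rw [derivedSeries_one] at hu hv hw
  have hc : ⁅u⁻¹, v⁻¹⁆ ∈ derivedSeries G 2 := by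
    rw [derivedSeries_succ, derivedSeries_one]
    exact Subgroup.commutator_mem_commutator (inv_mem hu) (inv_mem hv)
  rw [conj_eq_mul_commutatorElement_inv_inv,
    commutatorElement_mul_left_of_commute_s3
      (Subgroup.commute_of_mem_of_commutator_top_top_eq_bot h hc hw)]
end

section
/- In any group G satisfying [G'', G, G] = 1, for all u, v in G' and x, y in G with x ≡ y modulo G', we have [u^x, v] = [u^y, v]. In particular, [u^{xy}, v] = [u^{yx}, v]. -/
/-!
By the three subgroups lemma, `[G'', G, G] = 1` forces `[G', G''] = 1`. Conjugates of `u` by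
elements congruent modulo `G'` differ by a factor in `[G', G'] = G''`, which commutes with
`v ∈ G'` and therefore drops out of the commutator with `v`.
-/

open scoped commutatorElement

namespace Subgroup

variable {G : Type*} [Group G]

theorem commutator_commutator_eq_bot_of_commutator_top_top {N : Subgroup G}
    (h : ⁅⁅N, (⊤ : Subgroup G)⁆, (⊤ : Subgroup G)⁆ = ⊥) : ⁅_root_.commutator G, N⁆ = ⊥ :=
  commutator_commutator_eq_bot_of_rotate (by rwa [commutator_comm ⊤ N]) h

theorem commutator_commutator_derivedSeries_one_eq_bot
    (h : ⁅⁅derivedSeries G 2, (⊤ : Subgroup G)⁆, (⊤ : Subgroup G)⁆ = ⊥) :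
    ⁅⁅derivedSeries G 1, derivedSeries G 1⁆, derivedSeries G 1⁆ = ⊥ := by
  rw [← derivedSeries_succ, commutator_comm, derivedSeries_one]
  exact commutator_commutator_eq_bot_of_commutator_top_top h

end Subgroup

section

variable {G : Type*} [Group G]

theorem commutatorElement_conj_left_eq_of_commute {a g v : G} (h : Commute ⁅a⁻¹, g⁻¹⁆ v) :
    ⁅g⁻¹ * a * g, v⁆ = ⁅a, v⁆ :=
  calc ⁅g⁻¹ * a * g, v⁆ = a * (⁅a⁻¹, g⁻¹⁆ * v) * ⁅a⁻¹, g⁻¹⁆⁻¹ * a⁻¹ * v⁻¹ := by group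
    _ = a * (v * ⁅a⁻¹, g⁻¹⁆) * ⁅a⁻¹, g⁻¹⁆⁻¹ * a⁻¹ * v⁻¹ := by rw [h.eq]
    _ = ⁅a, v⁆ := by group

theorem commutatorElement_conj_left_eq_of_inv_mul_mem {N : Subgroup G} [N.Normal]
    (hN : ⁅⁅N, N⁆, N⁆ = ⊥) {u v x y : G} (hu : u ∈ N) (hv : v ∈ N) (hxy : x⁻¹ * y ∈ N) :
    ⁅x⁻¹ * u * x, v⁆ = ⁅y⁻¹ * u * y, v⁆ := by
  have hux : x⁻¹ * u * x ∈ N := by simpa using Subgroup.Normal.conj_mem ‹_› u hu x⁻¹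
  have hcomm : Commute ⁅(x⁻¹ * u * x)⁻¹, (x⁻¹ * y)⁻¹⁆ v := by
    rw [Subgroup.commutator_eq_bot_iff_le_centralizer] at hN
    exact (Subgroup.mem_centralizer_iff.mp
      (hN (Subgroup.commutator_mem_commutator (N.inv_mem hux) (N.inv_mem hxy))) v hv).symm
  rw [← commutatorElement_conj_left_eq_of_commute hcomm]
  group

end

theorem stmt4 {G : Type*} [Group G]
    (h : ⁅⁅derivedSeries G 2, (⊤ : Subgroup G)⁆, (⊤ : Subgroup G)⁆ = (⊥ : Subgroup G))
    (u v : G) (hu : u ∈ derivedSeries G 1) (hv : v ∈ derivedSeries G 1) :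
    (∀ x y : G, x⁻¹ * y ∈ derivedSeries G 1 →
      ⁅x⁻¹ * u * x, v⁆ = ⁅y⁻¹ * u * y, v⁆) ∧
    (∀ x y : G, ⁅(x * y)⁻¹ * u * (x * y), v⁆ = ⁅(y * x)⁻¹ * u * (y * x), v⁆) := by
  have hN := Subgroup.commutator_commutator_derivedSeries_one_eq_bot h
  have hconj (x y : G) (hxy : x⁻¹ * y ∈ derivedSeries G 1) :
      ⁅x⁻¹ * u * x, v⁆ = ⁅y⁻¹ * u * y, v⁆ :=
    haveI := derivedSeries_normal G 1
    commutatorElement_conj_left_eq_of_inv_mul_mem hN hu hv hxy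
  refine ⟨hconj, fun x y => hconj _ _ ?_⟩
  have hyx : (x * y)⁻¹ * (y * x) = ⁅y⁻¹, x⁻¹⁆ := by group
  rw [hyx, derivedSeries_one]
  exact Subgroup.commutator_mem_commutator (Subgroup.mem_top _) (Subgroup.mem_top _)
end

section
/- In any group G satisfying [G'', G, G] = 1, for all u, v in the derived subgroup G' and all x in G, the following commutators are all equal: [u, v, x⁻¹] = [u⁻¹, v, x] = [u, v⁻¹, x] = [[u, v]⁻¹, x] = [u, v, x]⁻¹. -/
/-!
The hypothesis says `G'' ≤ Z₂(G)`. For `c ∈ Z₂(G)` every `⁅c, x⁆` is central, so `⁅c, x⁻¹⁆` and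
`⁅c⁻¹, x⁆`, being conjugates of `⁅c, x⁆⁻¹`, equal it, and `⁅c, x⁆` only depends on the conjugacy
class of `c`. Since `⁅u⁻¹, v⁆` and `⁅u, v⁻¹⁆` are conjugates of `⁅u, v⁆⁻¹ ∈ G''`, all five
commutators equal `⁅⁅u, v⁆, x⁆⁻¹`.
-/

open scoped commutatorElement

section UpperCentralSeriesTwo

variable {G : Type*} [Group G] {c : G}

theorem le_upperCentralSeries_two_of_commutator_commutator_eq_bot {H : Subgroup G}
    (h : ⁅⁅H, (⊤ : Subgroup G)⁆, (⊤ : Subgroup G)⁆ = ⊥) :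
    H ≤ Subgroup.upperCentralSeries G 2 := by
  intro c hc
  rw [Subgroup.mem_upperCentralSeries_succ_iff]
  intro y
  rw [Subgroup.upperCentralSeries_one, Subgroup.mem_center_iff]
  intro z
  have hcyz : ⁅⁅c, y⁆, z⁆ ∈ (⊥ : Subgroup G) :=
    h ▸ Subgroup.commutator_mem_commutator
      (Subgroup.commutator_mem_commutator hc (Subgroup.mem_top y)) (Subgroup.mem_top z)
  exact (commutatorElement_eq_one_iff_commute.mp (Subgroup.mem_bot.mp hcyz)).symm.eq

theorem commutatorElement_mem_center_of_mem_upperCentralSeries_two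
    (hc : c ∈ Subgroup.upperCentralSeries G 2) (y : G) : ⁅c, y⁆ ∈ Subgroup.center G :=
  Subgroup.upperCentralSeries_one G ▸ Subgroup.mem_upperCentralSeries_succ_iff.mp hc y

theorem conj_eq_of_mem_center {z : G} (hz : z ∈ Subgroup.center G) (g : G) :
    g * z * g⁻¹ = z := by
  rw [Subgroup.mem_center_iff.mp hz g, mul_inv_cancel_right]

theorem commutatorElement_inv_right_of_mem_upperCentralSeries_two
    (hc : c ∈ Subgroup.upperCentralSeries G 2) (x : G) : ⁅c, x⁻¹⁆ = ⁅c, x⁆⁻¹ := by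
  have hconj : ⁅c, x⁻¹⁆ = x⁻¹ * ⁅c, x⁆⁻¹ * x⁻¹⁻¹ := by
    simp only [commutatorElement_def]; group
  rw [hconj, conj_eq_of_mem_center
    (inv_mem (commutatorElement_mem_center_of_mem_upperCentralSeries_two hc x))]

theorem commutatorElement_inv_left_of_mem_upperCentralSeries_two
    (hc : c ∈ Subgroup.upperCentralSeries G 2) (x : G) : ⁅c⁻¹, x⁆ = ⁅c, x⁆⁻¹ := by
  have hconj : ⁅c⁻¹, x⁆ = c⁻¹ * ⁅c, x⁆⁻¹ * c⁻¹⁻¹ := by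
    simp only [commutatorElement_def]; group
  rw [hconj, conj_eq_of_mem_center
    (inv_mem (commutatorElement_mem_center_of_mem_upperCentralSeries_two hc x))]

theorem commutatorElement_mul_left_of_mem_upperCentralSeries_two
    (hc : c ∈ Subgroup.upperCentralSeries G 2) (b x : G) : ⁅b * c, x⁆ = ⁅c, x⁆ * ⁅b, x⁆ := by
  have hconj : ⁅b * c, x⁆ = b * ⁅c, x⁆ * b⁻¹ * ⁅b, x⁆ := by
    simp only [commutatorElement_def]; group
  rw [hconj,
    conj_eq_of_mem_center (commutatorElement_mem_center_of_mem_upperCentralSeries_two hc x)]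

theorem commutatorElement_conj_left_of_mem_upperCentralSeries_two
    (hc : c ∈ Subgroup.upperCentralSeries G 2) (g x : G) : ⁅g * c * g⁻¹, x⁆ = ⁅c, x⁆ := by
  have hgc : ⁅g, c⁆ ∈ Subgroup.center G := by
    rw [← commutatorElement_inv]
    exact inv_mem (commutatorElement_mem_center_of_mem_upperCentralSeries_two hc g)
  have hgcx : ⁅⁅g, c⁆, x⁆ = 1 :=
    commutatorElement_eq_one_iff_commute.mpr (Subgroup.mem_center_iff.mp hgc x).symm
  have hconj : g * c * g⁻¹ = ⁅g, c⁆ * c := by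
    simp only [commutatorElement_def]; group
  rw [hconj, commutatorElement_mul_left_of_mem_upperCentralSeries_two hc, hgcx, mul_one]

end UpperCentralSeriesTwo

theorem stmt7 {G : Type*} [Group G]
    (h : ⁅⁅derivedSeries G 2, (⊤ : Subgroup G)⁆, (⊤ : Subgroup G)⁆ = (⊥ : Subgroup G))
    (u v : G) (hu : u ∈ derivedSeries G 1) (hv : v ∈ derivedSeries G 1) (x : G) :
    ⁅⁅u, v⁆, x⁻¹⁆ = ⁅⁅u⁻¹, v⁆, x⁆ ∧ ⁅⁅u⁻¹, v⁆, x⁆ = ⁅⁅u, v⁻¹⁆, x⁆ ∧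
    ⁅⁅u, v⁻¹⁆, x⁆ = ⁅⁅u, v⁆⁻¹, x⁆ ∧ ⁅⁅u, v⁆⁻¹, x⁆ = ⁅⁅u, v⁆, x⁆⁻¹ := by
  have huv : ⁅u, v⁆ ∈ Subgroup.upperCentralSeries G 2 :=
    le_upperCentralSeries_two_of_commutator_commutator_eq_bot h
      (Subgroup.commutator_mem_commutator hu hv)
  have huv' : ⁅u, v⁆⁻¹ ∈ Subgroup.upperCentralSeries G 2 := inv_mem huv
  have e1 := commutatorElement_inv_right_of_mem_upperCentralSeries_two huv x
  have e4 := commutatorElement_inv_left_of_mem_upperCentralSeries_two huv x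
  have e2 : ⁅⁅u⁻¹, v⁆, x⁆ = ⁅⁅u, v⁆⁻¹, x⁆ := by
    have hconj : ⁅u⁻¹, v⁆ = u⁻¹ * ⁅u, v⁆⁻¹ * u⁻¹⁻¹ := by
      simp only [commutatorElement_def]; group
    rw [hconj, commutatorElement_conj_left_of_mem_upperCentralSeries_two huv']
  have e3 : ⁅⁅u, v⁻¹⁆, x⁆ = ⁅⁅u, v⁆⁻¹, x⁆ := by
    have hconj : ⁅u, v⁻¹⁆ = v⁻¹ * ⁅u, v⁆⁻¹ * v⁻¹⁻¹ := by
      simp only [commutatorElement_def]; group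
    rw [hconj, commutatorElement_conj_left_of_mem_upperCentralSeries_two huv']
  exact ⟨e1.trans (e2.trans e4).symm, e2.trans e3.symm, e3, e4⟩
end

section
/- In any group G satisfying [G'', G, G] = 1, for all u, v in the derived subgroup G' and all x, y, z in G, we have [u^x, v^y, z] = [u^{x y⁻¹}, v, z]. -/
/-!
Write `w = u^(x y⁻¹)`, so that `u^x = w^y` and `[u^x, v^y] = [w, v]^y`. Since `[w, v] ∈ G''`,
conjugating it by `y` only multiplies it by an element of `[G'', G]`, which is central
by hypothesis and therefore disappears from the outer commutator with `z`.
-/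

open scoped commutatorElement

open Subgroup

section

variable {G : Type*} [Group G]

theorem commutatorElement_mul_left_of_mem_center {d : G} (hd : d ∈ center G) (c z : G) :
    ⁅c * d, z⁆ = ⁅c, z⁆ := by
  rw [commutatorElement_mul_left_eq_conj_mul,
    commutatorElement_eq_one_iff_mul_comm.mpr (mem_center_iff.mp hd z).symm, mul_one,
    mul_inv_cancel, one_mul]

theorem commutatorElement_conj_left_of_mem_center {c g : G} (h : ⁅c⁻¹, g⁻¹⁆ ∈ center G) (z : G) :
    ⁅g⁻¹ * c * g, z⁆ = ⁅c, z⁆ := by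
  have hconj : g⁻¹ * c * g = c * ⁅c⁻¹, g⁻¹⁆ := by rw [commutatorElement_def]; group
  rw [hconj, commutatorElement_mul_left_of_mem_center h]

theorem commutatorElement_conj_left_of_commutator_commutator_top_eq_bot {H : Subgroup G}
    (hH : ⁅⁅H, (⊤ : Subgroup G)⁆, (⊤ : Subgroup G)⁆ = ⊥) {c : G} (hc : c ∈ H) (g z : G) :
    ⁅g⁻¹ * c * g, z⁆ = ⁅c, z⁆ :=
  commutatorElement_conj_left_of_mem_center
    (commutator_top_right_eq_bot_iff_le_center.mp hH
      (commutator_mem_commutator (inv_mem hc) (mem_top _))) z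

end

theorem stmt8 {G : Type*} [Group G]
    (h : ⁅⁅derivedSeries G 2, (⊤ : Subgroup G)⁆, (⊤ : Subgroup G)⁆ = (⊥ : Subgroup G))
    (u v : G) (hu : u ∈ derivedSeries G 1) (hv : v ∈ derivedSeries G 1) (x y z : G) :
    ⁅⁅x⁻¹ * u * x, y⁻¹ * v * y⁆, z⁆ =
      ⁅⁅(x * y⁻¹)⁻¹ * u * (x * y⁻¹), v⁆, z⁆ := by
  set w := (x * y⁻¹)⁻¹ * u * (x * y⁻¹)
  have hw : w ∈ derivedSeries G 1 := by
    have hconj := (derivedSeries_normal G 1).conj_mem u hu (x * y⁻¹)⁻¹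
    rwa [inv_inv] at hconj
  have hwv : ⁅w, v⁆ ∈ derivedSeries G 2 := by
    rw [derivedSeries_succ]
    exact commutator_mem_commutator hw hv
  have hux : x⁻¹ * u * x = y⁻¹ * w * y := by simp only [w]; group
  have hconj : ⁅y⁻¹ * w * y, y⁻¹ * v * y⁆ = y⁻¹ * ⁅w, v⁆ * y := by
    simpa using (conjugate_commutatorElement w v y⁻¹).symm
  rw [hux, hconj]
  exact commutatorElement_conj_left_of_commutator_commutator_top_eq_bot h hwv y z
end

section
/- For any group G, the subgroup [G'', G'] is contained in [G'', G, G], i.e. [G'', G'] ⊆ [[G'', G], G]. -/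
theorem stmt9 {G : Type*} [Group G] :
    ⁅derivedSeries G 2, derivedSeries G 1⁆ ≤ ⁅⁅derivedSeries G 2, (⊤ : Subgroup G)⁆, (⊤ : Subgroup G)⁆ := by
  set D : Subgroup G := derivedSeries G 2 with hD
  have hDn : D.Normal := derivedSeries_normal G 2
  set T : Subgroup G := ⁅⁅D, (⊤ : Subgroup G)⁆, (⊤ : Subgroup G)⁆ with hT
  have hTn : T.Normal := Subgroup.commutator_normal _ _
  let f : G →* G ⧸ T := QuotientGroup.mk' T
  have hker : (⁅⁅D, (⊤ : Subgroup G)⁆, (⊤ : Subgroup G)⁆ : Subgroup G).map f = ⊥ := by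
    rw [Subgroup.map_eq_bot_iff, QuotientGroup.ker_mk']
  have htop : (⊤ : Subgroup G).map f = ⊤ :=
    Subgroup.map_top_of_surjective f (QuotientGroup.mk'_surjective T)
  have h1 : ⁅⁅D.map f, (⊤ : Subgroup (G ⧸ T))⁆, (⊤ : Subgroup (G ⧸ T))⁆ = ⊥ := by
    rw [← htop, ← Subgroup.map_commutator, ← Subgroup.map_commutator, hker]
  have h2 : ⁅⁅(⊤ : Subgroup (G ⧸ T)), D.map f⁆, (⊤ : Subgroup (G ⧸ T))⁆ = ⊥ := by
    rw [Subgroup.commutator_comm (⊤ : Subgroup (G ⧸ T)) (D.map f)]; exact h1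
  have h3 := Subgroup.commutator_commutator_eq_bot_of_rotate h2 h1
  -- h3 : ⁅⁅⊤, ⊤⁆, D.map f⁆ = ⊥
  have key : (⁅D, derivedSeries G 1⁆ : Subgroup G).map f = ⊥ := by
    rw [Subgroup.map_commutator, derivedSeries_succ, derivedSeries_zero,
      Subgroup.map_commutator, htop, Subgroup.commutator_comm, ← h3]
  have : (⁅D, derivedSeries G 1⁆ : Subgroup G) ≤ f.ker := (Subgroup.map_eq_bot_iff _).mp key
  rwa [QuotientGroup.ker_mk'] at this
end

section
/- Let G be a group and let θ₁, θ₂ be automorphisms of G that each induce the identity map on G/G''. Then θ₁ and θ₂ agree with the identity on G'' — that is, θ₁(u) = u for all u ∈ G''. -/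
/-!
By the three subgroups lemma, `[[G'', G], G] = 1` forces `[G', G''] = 1`. An automorphism inducing
the identity on `G/G''` moves every element of `G'` by a factor in `G''`, i.e. by an element
centralising `G'`; such factors cancel in commutators, so `G'' = [G', G']` is fixed pointwise.
-/

open scoped commutatorElement

section

variable {G : Type*} [Group G]

theorem commutatorElement_mul_mul_of_commute {a b c d : G} (hca : Commute c a)
    (hcb : Commute c b) (hcd : Commute c d) (hda : Commute d a) (hdb : Commute d b) :
    ⁅c * a, d * b⁆ = ⁅a, b⁆ := by
  have hc : Commute c (a * (d * b) * a⁻¹) :=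
    (hca.mul_right (hcd.mul_right hcb)).mul_right hca.inv_right
  have hd : Commute d ⁅a, b⁆ :=
    ((hda.mul_right hdb).mul_right hda.inv_right).mul_right hdb.inv_right
  calc ⁅c * a, d * b⁆ = c * (a * (d * b) * a⁻¹) * c⁻¹ * (d * b)⁻¹ := by
        rw [commutatorElement_def]; group
    _ = a * (d * b) * a⁻¹ * (d * b)⁻¹ := by rw [hc.eq]; group
    _ = d * ⁅a, b⁆ * d⁻¹ := by rw [commutatorElement_def, ← mul_assoc a d, ← hda.eq]; group
    _ = ⁅a, b⁆ := by rw [hd.eq]; group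

theorem MonoidHom.apply_eq_self_of_mem_commutator {H A : Subgroup G} (hAH : A ≤ H)
    (hHA : ⁅H, A⁆ = ⊥) (f : G →* G) (hf : ∀ g ∈ H, f g * g⁻¹ ∈ A) :
    ∀ u ∈ ⁅H, H⁆, f u = u := by
  have hcomm : ∀ x ∈ H, ∀ y ∈ A, Commute y x := fun x hx y hy =>
    Subgroup.commutator_eq_bot_iff_le_centralizer.mp hHA hx y hy
  suffices ⁅H, H⁆ ≤ f.eqLocus (MonoidHom.id G) from fun u hu => this hu
  refine Subgroup.commutator_le.mpr fun a ha b hb => ?_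
  have hfa : f a = (f a * a⁻¹) * a := by group
  have hfb : f b = (f b * b⁻¹) * b := by group
  have hc := hf a ha
  have hd := hf b hb
  change f ⁅a, b⁆ = ⁅a, b⁆
  rw [map_commutatorElement, hfa, hfb]
  exact commutatorElement_mul_mul_of_commute (hcomm a ha _ hc) (hcomm b hb _ hc)
    (hcomm _ (hAH hd) _ hc) (hcomm a ha _ hd) (hcomm b hb _ hd)

theorem commutator_derivedSeries_one_two_eq_bot
    (h : ⁅⁅derivedSeries G 2, (⊤ : Subgroup G)⁆, (⊤ : Subgroup G)⁆ = ⊥) :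
    ⁅derivedSeries G 1, derivedSeries G 2⁆ = ⊥ :=
  Subgroup.commutator_commutator_eq_bot_of_rotate (H₁ := ⊤) (H₂ := ⊤)
    (by rwa [Subgroup.commutator_comm ⊤ (derivedSeries G 2)]) h

end

theorem stmt16 {G : Type*} [Group G]
    (h : ⁅⁅derivedSeries G 2, (⊤ : Subgroup G)⁆, (⊤ : Subgroup G)⁆ = (⊥ : Subgroup G))
    (θ₁ θ₂ : G ≃* G)
    (h₁ : ∀ g : G, θ₁ g * g⁻¹ ∈ derivedSeries G 2)
    (h₂ : ∀ g : G, θ₂ g * g⁻¹ ∈ derivedSeries G 2) :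
    ∀ u ∈ derivedSeries G 2, θ₁ u = u ∧ θ₂ u = u := by
  have hle : derivedSeries G 2 ≤ derivedSeries G 1 := (derivedSeries G 1).commutator_le_self
  have hcomm := commutator_derivedSeries_one_two_eq_bot h
  intro u hu
  exact ⟨(θ₁ : G →* G).apply_eq_self_of_mem_commutator hle hcomm (fun g _ => h₁ g) u hu,
    (θ₂ : G →* G).apply_eq_self_of_mem_commutator hle hcomm (fun g _ => h₂ g) u hu⟩
end

section
/- Let G be a group with [G'', G, G] = 1. If θ₁ and θ₂ are automorphisms of G inducing the identity on G/G'', then θ₁ and θ₂ commute: θ₁∘θ₂ = θ₂∘θ₁. -/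
/-!
By the three subgroups lemma, `[[G'', G], G] = 1` forces `[G', G''] = 1`; as `G'' ≤ G'`, this
makes `G''` abelian and central in `G'`. An automorphism `θ` with `θ x ∈ G'' x` therefore moves
each `x ∈ G'` only by a factor central in `G'`, which does not change commutators, so `θ` fixes
`G'' = [G', G']` pointwise. Writing `θ₁ g = a g` and `θ₂ g = b g` with `a, b ∈ G''`, we get
`θ₁ (θ₂ g) = b a g` and `θ₂ (θ₁ g) = a b g`, which agree since `G''` is abelian.
-/

open scoped commutatorElement

section Commutators

variable {G : Type*} [Group G]

theorem commutatorElement_mul_left_of_commute_s17 {c x y : G} (hx : Commute c x) (hy : Commute c y) :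
    ⁅c * x, y⁆ = ⁅x, y⁆ := by
  have hconj : Commute c (x * y * x⁻¹) := (hx.mul_right hy).mul_right hx.inv_right
  calc ⁅c * x, y⁆ = c * (x * y * x⁻¹) * c⁻¹ * y⁻¹ := by group
    _ = ⁅x, y⁆ := by rw [hconj.eq, mul_inv_cancel_right, commutatorElement_def]

theorem commutatorElement_mul_right_of_commute_s17 {d x y : G} (hx : Commute d x) (hy : Commute d y) :
    ⁅x, d * y⁆ = ⁅x, y⁆ := by
  rw [← commutatorElement_inv, commutatorElement_mul_left_of_commute_s17 hy hx, commutatorElement_inv]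

theorem derivedSeries_two_le_centralizer_derivedSeries_one
    (h : ⁅⁅derivedSeries G 2, (⊤ : Subgroup G)⁆, (⊤ : Subgroup G)⁆ = ⊥) :
    derivedSeries G 2 ≤ Subgroup.centralizer (derivedSeries G 1) := by
  rw [← Subgroup.commutator_eq_bot_iff_le_centralizer, Subgroup.commutator_comm,
    derivedSeries_one]
  refine Subgroup.commutator_commutator_eq_bot_of_rotate ?_ h
  rwa [Subgroup.commutator_comm ⊤ (derivedSeries G 2)]

end Commutators

namespace MonoidHom

variable {G : Type*} [Group G]

theorem apply_eq_self_of_mem_commutator_s17 (f : G →* G) {H N : Subgroup G} (hNH : N ≤ H)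
    (hN : N ≤ Subgroup.centralizer H) (hf : ∀ x ∈ H, f x * x⁻¹ ∈ N) :
    ∀ z ∈ ⁅H, H⁆, f z = z := by
  suffices ⁅H, H⁆ ≤ f.eqLocus (MonoidHom.id G) from fun z hz => this hz
  refine Subgroup.commutator_le.mpr fun x hx y hy => ?_
  have central : ∀ c ∈ N, ∀ z ∈ H, Commute c z := fun c hc z hz => (hN hc z hz).symm
  obtain ⟨c, hc, hfx⟩ : ∃ c ∈ N, f x = c * x := ⟨_, hf x hx, by group⟩
  obtain ⟨d, hd, hfy⟩ : ∃ d ∈ N, f y = d * y := ⟨_, hf y hy, by group⟩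
  change f ⁅x, y⁆ = ⁅x, y⁆
  rw [map_commutatorElement, hfx, hfy,
    commutatorElement_mul_left_of_commute_s17 (central c hc x hx)
      ((central c hc d (hNH hd)).mul_right (central c hc y hy)),
    commutatorElement_mul_right_of_commute_s17 (central d hd x hx) (central d hd y hy)]

theorem comm_apply_of_mul_inv_mem {N : Subgroup G} (hN : ∀ a ∈ N, ∀ b ∈ N, Commute a b)
    (f₁ f₂ : G →* G) (fix₁ : ∀ a ∈ N, f₁ a = a) (fix₂ : ∀ a ∈ N, f₂ a = a)
    (h₁ : ∀ g, f₁ g * g⁻¹ ∈ N) (h₂ : ∀ g, f₂ g * g⁻¹ ∈ N) (g : G) :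
    f₁ (f₂ g) = f₂ (f₁ g) := by
  obtain ⟨a, ha, e₁⟩ : ∃ a ∈ N, f₁ g = a * g := ⟨_, h₁ g, by group⟩
  obtain ⟨b, hb, e₂⟩ : ∃ b ∈ N, f₂ g = b * g := ⟨_, h₂ g, by group⟩
  rw [e₂, map_mul, fix₁ b hb, e₁, map_mul, fix₂ a ha, e₂, ← mul_assoc, ← mul_assoc,
    (hN b hb a ha).eq]

end MonoidHom

theorem stmt17 {G : Type*} [Group G]
    (h : ⁅⁅derivedSeries G 2, (⊤ : Subgroup G)⁆, (⊤ : Subgroup G)⁆ = (⊥ : Subgroup G))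
    (θ₁ θ₂ : G ≃* G)
    (h₁ : ∀ g : G, θ₁ g * g⁻¹ ∈ derivedSeries G 2)
    (h₂ : ∀ g : G, θ₂ g * g⁻¹ ∈ derivedSeries G 2) :
    ∀ g : G, θ₁ (θ₂ g) = θ₂ (θ₁ g) := by
  have hcen := derivedSeries_two_le_centralizer_derivedSeries_one h
  have hle : derivedSeries G 2 ≤ derivedSeries G 1 := derivedSeries_antitone G (by norm_num)
  have hab : ∀ a ∈ derivedSeries G 2, ∀ b ∈ derivedSeries G 2, Commute a b :=
    fun a ha b hb => (hcen ha b (hle hb)).symm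
  have hfix : ∀ θ : G ≃* G, (∀ g, θ g * g⁻¹ ∈ derivedSeries G 2) →
      ∀ a ∈ derivedSeries G 2, θ a = a := fun θ hθ =>
    (θ : G →* G).apply_eq_self_of_mem_commutator_s17 hle hcen fun x _ => hθ x
  exact MonoidHom.comm_apply_of_mul_inv_mem hab θ₁ θ₂ (hfix θ₁ h₁) (hfix θ₂ h₂) h₁ h₂
end
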